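/- Fix any vertex i of K_{M,M} and any exact pruning set Q. Let E(i) be the set consisting of the first M/2 edges incident to i that the greedy 2-approximation algorithm (Algorithm 1) adds to P (in order of addition), and let Q(i) be the set of edges of Q incident to i. Then the total weight of E(i) is at most the total weight of Q(i): Σ_{e ∈ E(i)} w(e) ≤ Σ_{e ∈ Q(i)} w(e). -/

import Mathlib

/-!
Setting: the complete bipartite graph `K_{M,M}`.  An edge is a pair
`(u, v) : Fin M × Fin M` joining left vertex `u` with right vertex `v`.
Edge weights are `w (u, v) = |W u v|` for an `M × M` real matrix `W`.
-/

/-- Number of edges of `P` incident to the left vertex `u`. -/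
def degL {M : ℕ} (P : Finset (Fin M × Fin M)) (u : Fin M) : ℕ :=
  (P.filter fun e => e.1 = u).card

/-- Number of edges of `P` incident to the right vertex `v`. -/
def degR {M : ℕ} (P : Finset (Fin M × Fin M)) (v : Fin M) : ℕ :=
  (P.filter fun e => e.2 = v).card

/-- One step of the greedy algorithm: add the edge `e = (u, v)` to the current set `P`
iff `u` is incident to fewer than `k` edges of `P` or `v` is incident to fewer than `k`
edges of `P`. -/
def greedyStep {M : ℕ} (k : ℕ) (P : Finset (Fin M × Fin M)) (e : Fin M × Fin M) :
    Finset (Fin M × Fin M) :=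
  if degL P e.1 < k ∨ degR P e.2 < k then insert e P else P

/-- The greedy 2-approximation algorithm (Algorithm 1): process the edges in the order
given by the list `L`, starting from `∅`. -/
def greedy {M : ℕ} (k : ℕ) (L : List (Fin M × Fin M)) : Finset (Fin M × Fin M) :=
  L.foldl (greedyStep k) ∅

/-- An exact pruning set: every left vertex and every right vertex is incident to
exactly `k` of its edges. -/
def IsExactPruning {M : ℕ} (k : ℕ) (Q : Finset (Fin M × Fin M)) : Prop :=
  (∀ u : Fin M, degL Q u = k) ∧ (∀ v : Fin M, degR Q v = k)

/-- A vertex of `K_{M,M}`: either a left vertex `Sum.inl u` or a right vertex `Sum.inr v`. -/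
def Inc {M : ℕ} : (Fin M ⊕ Fin M) → (Fin M × Fin M) → Prop
  | Sum.inl u, e => e.1 = u
  | Sum.inr v, e => e.2 = v

instance {M : ℕ} (x : Fin M ⊕ Fin M) (e : Fin M × Fin M) : Decidable (Inc x e) := by
  cases x
  · exact inferInstanceAs (Decidable (e.1 = _))
  · exact inferInstanceAs (Decidable (e.2 = _))

/-- The edges added to `P` by the greedy algorithm, listed in the order in which the
algorithm adds them (i.e. in the order of the enumeration `L`). -/
def addedList {M : ℕ} (k : ℕ) (L : List (Fin M × Fin M)) : List (Fin M × Fin M) :=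
  L.filter fun e => decide (e ∈ greedy k L)

/-- `E(x)`: the first `k` edges incident to the vertex `x` that the greedy algorithm adds
to `P`, in order of addition. -/
def firstEdges {M : ℕ} (k : ℕ) (L : List (Fin M × Fin M)) (x : Fin M ⊕ Fin M) :
    List (Fin M × Fin M) :=
  ((addedList k L).filter fun e => decide (Inc x e)).take k


/-! The first `k` edges at a vertex `x` in the enumeration are all accepted by the greedy
algorithm, because before each of them `x` has fewer than `k` edges in `P`.  So `E(x)` consists
of the `k` lightest edges at `x`, and any `k` edges at `x`, such as `Q(x)`, weigh at least as much.
-/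

theorem List.take_filter_of_forall_mem_take {α : Type*} {p : α → Bool} {l : List α} {k : ℕ}
    (h : ∀ a ∈ l.take k, p a) : (l.filter p).take k = l.take k := by
  induction l generalizing k with
  | nil => simp
  | cons a l ih =>
    cases k with
    | zero => simp
    | succ k =>
      simp only [List.take_succ_cons, List.mem_cons, forall_eq_or_imp] at h
      simp [h.1, ih h.2]

theorem List.sum_map_take_card_le_sum {α β : Type*} [DecidableEq α] [AddCommMonoid β]
    [PartialOrder β] [IsOrderedAddMonoid β] (w : α → β) {l : List α}
    (hl : l.Pairwise (w · ≤ w ·)) {S : Finset α} (hS : ∀ x ∈ S, x ∈ l) :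
    ((l.take S.card).map w).sum ≤ ∑ x ∈ S, w x := by
  induction l generalizing S with
  | nil =>
    obtain rfl : S = ∅ := Finset.eq_empty_of_forall_notMem fun x hx => by simpa using hS x hx
    simp
  | cons a l ih =>
    rcases S.eq_empty_or_nonempty with rfl | ⟨b, hb⟩
    · simp
    obtain ⟨c, hcS, hac, hc⟩ : ∃ c ∈ S, w a ≤ w c ∧ ∀ x ∈ S.erase c, x ∈ l := by
      by_cases ha : a ∈ S
      · refine ⟨a, ha, le_rfl, fun x hx => ?_⟩
        exact (List.mem_cons.1 (hS x (Finset.mem_of_mem_erase hx))).resolve_left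
          (Finset.ne_of_mem_erase hx)
      · have hSl : ∀ x ∈ S, x ∈ l := fun x hx =>
          (List.mem_cons.1 (hS x hx)).resolve_left (ne_of_mem_of_not_mem hx ha)
        exact ⟨b, hb, List.rel_of_pairwise_cons hl (hSl b hb),
          fun x hx => hSl x (Finset.mem_of_mem_erase hx)⟩
    rw [← Finset.card_erase_add_one hcS, ← Finset.add_sum_erase S w hcS, List.take_succ_cons,
      List.map_cons, List.sum_cons]
    exact add_le_add hac (ih hl.of_cons hc)

section Greedy

variable {M : ℕ} (k : ℕ)

theorem greedy_append_singleton (L : List (Fin M × Fin M)) (e : Fin M × Fin M) :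
    greedy k (L ++ [e]) = greedyStep k (greedy k L) e :=
  List.foldl_append

theorem subset_greedyStep (P : Finset (Fin M × Fin M)) (e : Fin M × Fin M) :
    P ⊆ greedyStep k P e := by
  unfold greedyStep
  split_ifs
  exacts [Finset.subset_insert e P, subset_rfl]

theorem greedyStep_subset_insert (P : Finset (Fin M × Fin M)) (e : Fin M × Fin M) :
    greedyStep k P e ⊆ insert e P := by
  unfold greedyStep
  split_ifs
  exacts [subset_rfl, Finset.subset_insert e P]

theorem greedyStep_eq_insert {P : Finset (Fin M × Fin M)} {e : Fin M × Fin M}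
    {x : Fin M ⊕ Fin M} (hx : Inc x e) (hdeg : (P.filter (Inc x ·)).card < k) :
    greedyStep k P e = insert e P := by
  rcases x with u | v
  · exact if_pos (Or.inl (hx ▸ hdeg))
  · exact if_pos (Or.inr (hx ▸ hdeg))

theorem greedy_subset_toFinset (L : List (Fin M × Fin M)) : greedy k L ⊆ L.toFinset := by
  induction L using List.reverseRecOn with
  | nil => exact subset_rfl
  | append_singleton L e ih =>
    rw [greedy_append_singleton]
    refine (greedyStep_subset_insert k _ e).trans (Finset.insert_subset (by simp) fun f hf => ?_)
    simp [List.mem_toFinset.1 (ih hf)]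

theorem card_filter_greedy_le (L : List (Fin M × Fin M)) (x : Fin M ⊕ Fin M) :
    ((greedy k L).filter (Inc x ·)).card ≤ (L.filter (Inc x ·)).length :=
  calc ((greedy k L).filter (Inc x ·)).card
      ≤ (L.toFinset.filter (Inc x ·)).card :=
        Finset.card_le_card (Finset.filter_subset_filter _ (greedy_subset_toFinset k L))
    _ = (L.filter (Inc x ·)).toFinset.card := by rw [List.toFinset_filter]; simp
    _ ≤ (L.filter (Inc x ·)).length := List.toFinset_card_le _

theorem mem_greedy_of_mem_take_filter (L : List (Fin M × Fin M)) (x : Fin M ⊕ Fin M) :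
    ∀ e ∈ (L.filter (Inc x ·)).take k, e ∈ greedy k L := by
  induction L using List.reverseRecOn with
  | nil => simp
  | append_singleton L a ih =>
    intro e he
    rw [List.filter_append, List.take_append] at he
    rcases List.mem_append.1 he with he | he
    · rw [greedy_append_singleton]
      exact subset_greedyStep k _ a (ih e he)
    · have hxa : Inc x a := by
        by_contra h
        simp [h] at he
      have hlt : (L.filter (Inc x ·)).length < k := by
        by_contra h
        simp [hxa, Nat.sub_eq_zero_of_le (not_lt.1 h)] at he
      obtain rfl : e = a := by simpa [hxa] using List.mem_of_mem_take he
      rw [greedy_append_singleton,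
        greedyStep_eq_insert k hxa ((card_filter_greedy_le k L x).trans_lt hlt)]
      exact Finset.mem_insert_self e _

theorem firstEdges_eq_take_filter (L : List (Fin M × Fin M)) (x : Fin M ⊕ Fin M) :
    firstEdges k L x = (L.filter (Inc x ·)).take k := by
  rw [firstEdges, addedList, List.filter_comm]
  exact List.take_filter_of_forall_mem_take fun e he => by
    simpa using mem_greedy_of_mem_take_filter k L x e he

end Greedy

theorem IsExactPruning.card_filter_inc {M k : ℕ} {Q : Finset (Fin M × Fin M)}
    (hQ : IsExactPruning k Q) (x : Fin M ⊕ Fin M) : (Q.filter (Inc x ·)).card = k := by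
  rcases x with u | v
  exacts [hQ.1 u, hQ.2 v]

theorem greedy_sum_le_general (M : ℕ) (w : Fin M × Fin M → ℝ)
    (L : List (Fin M × Fin M))
    (hcomplete : ∀ e : Fin M × Fin M, e ∈ L)
    (hsorted : L.Pairwise fun a b => w a ≤ w b)
    (i : Fin M ⊕ Fin M)
    (Q : Finset (Fin M × Fin M)) (hQ : IsExactPruning (M / 2) Q) :
    ((firstEdges (M / 2) L i).map w).sum ≤ ∑ e ∈ Q.filter (fun e => Inc i e), w e := by
  rw [firstEdges_eq_take_filter, ← hQ.card_filter_inc i]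
  refine List.sum_map_take_card_le_sum w (hsorted.filter _) fun e he => ?_
  exact List.mem_filter.2 ⟨hcomplete e, by simpa using (Finset.mem_filter.1 he).2⟩

/-- Fix a vertex `i` of `K_{M,M}` and an exact pruning set `Q`.  Let
`E(i)` be the list of the first `M/2` edges incident to `i` that the greedy algorithm adds
to `P` (in order of addition), and let `Q(i)` be the set of edges of `Q` incident to `i`.
Then the total weight of `E(i)` is at most the total weight of `Q(i)`. -/
theorem greedy_sum_le (M : ℕ) (hM : 0 < M) (hMeven : Even M)
    (W : Matrix (Fin M) (Fin M) ℝ) (w : Fin M × Fin M → ℝ)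
    (hw : ∀ e : Fin M × Fin M, w e = |W e.1 e.2|)
    (L : List (Fin M × Fin M)) (hnodup : L.Nodup)
    (hcomplete : ∀ e : Fin M × Fin M, e ∈ L)
    (hsorted : L.Pairwise fun a b => w a ≤ w b)
    (i : Fin M ⊕ Fin M)
    (Q : Finset (Fin M × Fin M)) (hQ : IsExactPruning (M / 2) Q) :
    ((firstEdges (M / 2) L i).map w).sum ≤ ∑ e ∈ Q.filter (fun e => Inc i e), w e :=
  greedy_sum_le_general M w L hcomplete hsorted i Q hQ
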